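/- arXiv:1910.14234 — 2 statements merged into one kernel-verified Lean document; each statement's English description precedes it below -/
import Mathlib

section
/- Let (M, g, ξ, η) carry two Kenmotsu structures (φ_1, η, ξ, g) and (φ_2, η, ξ, g) with φ_1 ∘ φ_2 = −φ_2 ∘ φ_1. Then φ_3 := φ_1 ∘ φ_2 satisfies the Kenmotsu condition (∇_X φ_3)Y = g(φ_3 X, Y)ξ − η(Y) φ_3 X for all vector fields X, Y. -/
/-- An abstract calculus of vector fields on a manifold: `F` is the algebra of
smooth functions, `V` the module of vector fields, equipped with the directional
derivative action, Lie bracket, Riemannian metric `g`, and Levi-Civita connection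
`nabla` (metric-compatible and torsion-free). -/
structure VectorFieldCalculus (F : Type) (V : Type) [CommRing F] [AddCommGroup V]
    [Module F V] where
  act : V → F → F
  act_add : ∀ X f g, act X (f + g) = act X f + act X g
  act_mul : ∀ X f g, act X (f * g) = f * act X g + g * act X f
  act_addVF : ∀ X Y f, act (X + Y) f = act X f + act Y f
  act_smulVF : ∀ (f : F) (X : V) (h : F), act (f • X) h = f * act X h
  bracket : V → V → V
  bracket_act : ∀ X Y f, act (bracket X Y) f = act X (act Y f) - act Y (act X f)
  bracket_antisymm : ∀ X Y, bracket X Y = - bracket Y X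
  bracket_add_left : ∀ X Y Z, bracket (X + Y) Z = bracket X Z + bracket Y Z
  bracket_add_right : ∀ X Y Z, bracket X (Y + Z) = bracket X Y + bracket X Z
  bracket_smul_right : ∀ X (f : F) Y, bracket X (f • Y) = f • bracket X Y + act X f • Y
  jacobi : ∀ X Y Z, bracket X (bracket Y Z) + bracket Y (bracket Z X) +
      bracket Z (bracket X Y) = 0
  g : V → V → F
  g_symm : ∀ X Y, g X Y = g Y X
  g_add_left : ∀ X Y Z, g (X + Y) Z = g X Z + g Y Z
  g_smul_left : ∀ (f : F) X Y, g (f • X) Y = f * g X Y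
  nabla : V → V → V
  nabla_add_left : ∀ X Y Z, nabla (X + Y) Z = nabla X Z + nabla Y Z
  nabla_smul_left : ∀ (f : F) X Y, nabla (f • X) Y = f • nabla X Y
  nabla_add_right : ∀ X Y Z, nabla X (Y + Z) = nabla X Y + nabla X Z
  nabla_smul_right : ∀ X (f : F) Y, nabla X (f • Y) = f • nabla X Y + act X f • Y
  compat : ∀ X Y Z, act X (g Y Z) = g (nabla X Y) Z + g Y (nabla X Z)
  torsion_free : ∀ X Y, nabla X Y - nabla Y X = bracket X Y

/-- An almost contact metric structure `(φ, ξ, η, g)` on the vector-field calculus `C`. -/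
structure ACMData {F V : Type} [CommRing F] [AddCommGroup V] [Module F V]
    (C : VectorFieldCalculus F V) where
  phi : V → V
  xi : V
  eta : V → F
  phi_add : ∀ X Y, phi (X + Y) = phi X + phi Y
  phi_smul : ∀ (f : F) X, phi (f • X) = f • phi X
  eta_eq : ∀ X, eta X = C.g xi X
  phi_sq : ∀ X, phi (phi X) = -X + eta X • xi
  eta_xi : eta xi = 1
  phi_xi : phi xi = 0
  eta_phi : ∀ X, eta (phi X) = 0
  metric_phi : ∀ X Y, C.g (phi X) (phi Y) = C.g X Y - eta X * eta Y

/-- The Kenmotsu condition `(∇_X φ)Y = g(φX, Y)ξ − η(Y)φX`. -/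
def IsKenmotsu {F V : Type} [CommRing F] [AddCommGroup V] [Module F V]
    (C : VectorFieldCalculus F V) (A : ACMData C) : Prop :=
  ∀ X Y, C.nabla X (A.phi Y) - A.phi (C.nabla X Y) =
    C.g (A.phi X) Y • A.xi - A.eta Y • A.phi X

/-- Riemann curvature tensor `R(X,Y)Z` of the connection of `C`. -/
def curv {F V : Type} [CommRing F] [AddCommGroup V] [Module F V]
    (C : VectorFieldCalculus F V) (X Y Z : V) : V :=
  C.nabla X (C.nabla Y Z) - C.nabla Y (C.nabla X Z) - C.nabla (C.bracket X Y) Z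

/-- If `(φ₁,η,ξ,g)` and `(φ₂,η,ξ,g)` are Kenmotsu structures with
`φ₁∘φ₂ = −φ₂∘φ₁`, then `φ₃ := φ₁∘φ₂` satisfies the Kenmotsu condition
`(∇_X φ₃)Y = g(φ₃X, Y)ξ − η(Y)φ₃X`. -/
theorem third_kenmotsu {F V : Type} [CommRing F] [AddCommGroup V] [Module F V]
    (C : VectorFieldCalculus F V) (A1 A2 : ACMData C)
    (hxi : A1.xi = A2.xi) (heta : A1.eta = A2.eta)
    (hK1 : IsKenmotsu C A1) (hK2 : IsKenmotsu C A2)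
    (hanti : ∀ X, A1.phi (A2.phi X) = - A2.phi (A1.phi X))
    (hskew2 : ∀ X Y, C.g (A2.phi X) Y = - C.g X (A2.phi Y)) :
    ∀ X Y : V, C.nabla X (A1.phi (A2.phi Y)) - A1.phi (A2.phi (C.nabla X Y)) =
      C.g (A1.phi (A2.phi X)) Y • A1.xi - A1.eta Y • A1.phi (A2.phi X) := by
  
  intro X Y
  -- helper: phi is additive in sub and kills zero
  have phi_neg : ∀ (A : ACMData C) (Z : V), A.phi (-Z) = - A.phi Z := by
    intro A Z
    have : (-Z) = (-1 : F) • Z := by simp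
    rw [this, A.phi_smul]; simp
  have phi_sub : ∀ (A : ACMData C) (Z W : V), A.phi (Z - W) = A.phi Z - A.phi W := by
    intro A Z W
    rw [sub_eq_add_neg, A.phi_add, phi_neg, sub_eq_add_neg]
  have g_neg_left : ∀ Z W : V, C.g (-Z) W = - C.g Z W := by
    intro Z W
    have : (-Z) = (-1 : F) • Z := by simp
    rw [this, C.g_smul_left]; simp
  -- key metric identity
  have hg : C.g (A1.phi X) (A2.phi Y) = C.g (A1.phi (A2.phi X)) Y := by
    rw [hanti, g_neg_left, hskew2, C.g_symm]
    ring
  have heta2 : A1.eta (A2.phi Y) = 0 := by rw [heta, A2.eta_phi]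
  have hphi2xi : A1.phi A2.xi = 0 := by rw [← hxi, A1.phi_xi]
  have h1 := hK1 X (A2.phi Y)
  have h2 := hK2 X Y
  have h2' : A1.phi (C.nabla X (A2.phi Y) - A2.phi (C.nabla X Y)) =
      A1.phi (C.g (A2.phi X) Y • A2.xi - A2.eta Y • A2.phi X) := by rw [h2]
  rw [phi_sub, phi_sub, A1.phi_smul, A1.phi_smul, hphi2xi, smul_zero] at h2'
  calc C.nabla X (A1.phi (A2.phi Y)) - A1.phi (A2.phi (C.nabla X Y))
      = (C.nabla X (A1.phi (A2.phi Y)) - A1.phi (C.nabla X (A2.phi Y)))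
        + (A1.phi (C.nabla X (A2.phi Y)) - A1.phi (A2.phi (C.nabla X Y))) := by abel
    _ = (C.g (A1.phi X) (A2.phi Y) • A1.xi - A1.eta (A2.phi Y) • A1.phi X)
        + (0 - A2.eta Y • A1.phi (A2.phi X)) := by rw [h1, h2']
    _ = C.g (A1.phi (A2.phi X)) Y • A1.xi - A1.eta Y • A1.phi (A2.phi X) := by
        rw [hg, heta2, heta, zero_smul]; abel
end

section
/- Let (φ_1, η, ξ, g) and (φ_2, η, ξ, g) be two almost contact metric structures with φ_1 ∘ φ_2 = −φ_2 ∘ φ_1, and set φ_3 = φ_1 ∘ φ_2. Then (φ_3, η, ξ, g) is an almost contact metric structure, and φ_1 = φ_2 ∘ φ_3, φ_2 = φ_3 ∘ φ_1. -/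
/-- An almost contact metric structure `(φ, ξ, η, g)` on a real vector space. -/
structure ACMS {V : Type} [AddCommGroup V] [Module ℝ V]
    (g : V → V → ℝ) (ξ : V) (η : V →ₗ[ℝ] ℝ) (φ : V →ₗ[ℝ] V) : Prop where
  phi_sq : ∀ X, φ (φ X) = -X + η X • ξ
  eta_xi : η ξ = 1
  phi_xi : φ ξ = 0
  eta_phi : ∀ X, η (φ X) = 0
  metric : ∀ X Y, g (φ X) (φ Y) = g X Y - η X * η Y

/-- If `(φ₁,η,ξ,g)` and `(φ₂,η,ξ,g)` are almost contact metric
structures with `φ₁∘φ₂ = −φ₂∘φ₁`, then `φ₃ = φ₁∘φ₂` gives an almost contact metric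
structure `(φ₃,η,ξ,g)`, and `φ₁ = φ₂∘φ₃`, `φ₂ = φ₃∘φ₁`. -/
theorem third_acm_structure {V : Type} [AddCommGroup V] [Module ℝ V]
    (g : V → V → ℝ) (ξ : V) (η : V →ₗ[ℝ] ℝ) (φ₁ φ₂ : V →ₗ[ℝ] V)
    (h1 : ACMS g ξ η φ₁) (h2 : ACMS g ξ η φ₂)
    (hanti : ∀ X, φ₁ (φ₂ X) = - φ₂ (φ₁ X)) :
    ACMS g ξ η (φ₁ ∘ₗ φ₂) ∧ φ₁ = φ₂ ∘ₗ (φ₁ ∘ₗ φ₂) ∧ φ₂ = (φ₁ ∘ₗ φ₂) ∘ₗ φ₁ := by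
  refine ⟨⟨?_, h1.eta_xi, ?_, ?_, ?_⟩, ?_, ?_⟩
  · intro X
    have h : ∀ Y, φ₂ (φ₁ Y) = - φ₁ (φ₂ Y) := fun Y => by rw [hanti, neg_neg]
    have key : φ₁ (φ₂ (φ₁ (φ₂ X))) = - φ₁ (φ₁ (φ₂ (φ₂ X))) := by
      conv_lhs => rw [h (φ₂ X)]
      rw [map_neg]
    simp only [LinearMap.comp_apply, key, h2.phi_sq, map_add, map_neg, map_smul,
      h1.phi_xi, h1.phi_sq, h1.eta_xi]
    simp [smul_smul]
  · simp [h2.phi_xi]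
  · intro X; simp [h1.eta_phi]
  · intro X Y
    simp only [LinearMap.comp_apply, h1.metric, h2.metric, h2.eta_phi]
    ring
  · ext X
    simp only [LinearMap.comp_apply]
    rw [hanti, map_neg, h2.phi_sq, h1.eta_phi]
    simp
  · ext X
    simp only [LinearMap.comp_apply]
    rw [hanti (φ₁ X), h1.phi_sq]
    simp [h2.phi_xi]
end
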